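/- arXiv:1106.5369 — 4 statements merged into one kernel-verified Lean document; each statement's English description precedes it below -/
import Mathlib

section
/- The function v(x) = x²/2 on [-1,1] does not belong to the domain of the subdifferential of the total variation functional J. That is, there is no w ∈ L²(-1,1) such that for all h ∈ L²(-1,1) with v + h of bounded variation satisfying the same boundary values, J(v+h) - J(v) ≥ ∫_{-1}^{1} w·h dx, where J(u) = total variation of u on [-1,1] (with J = +∞ off BV). -/
/-!
Filling the bottom of the parabola up to height `δ²/2`, i.e. adding
`h = max (δ² - x²) 0 / 2`, replaces `x²/2` by `max (x², δ²) / 2` and lowers the total variation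
from `1` to `1 - δ²`. But `|h| ≤ δ²/2` and `h` vanishes off `(-δ, δ)`, so
`|∫ w h| ≤ δ²/2 · ∫_{-δ}^{δ} |w|`, which is `< δ²` once `δ` is small, by absolute continuity of
the integral of `|w|`. The subgradient inequality `-δ² ≥ ∫ w h` then fails.
-/
open MeasureTheory Set Filter Topology

theorem AntitoneOn.eVariationOn_eq {α : Type*} [LinearOrder α] {f : α → ℝ} {s : Set α} {a b : α}
    (hf : AntitoneOn f s) (as : a ∈ s) (bs : b ∈ s) :
    eVariationOn f (s ∩ Icc a b) = .ofReal (f a - f b) := by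
  have hneg : eVariationOn (fun x => -f x) (s ∩ Icc a b) = eVariationOn f (s ∩ Icc a b) := by
    simp only [eVariationOn, edist_neg_neg]
  rw [← hneg, hf.neg.eVariationOn_eq as bs, neg_sub_neg]

theorem eVariationOn_Icc_of_antitoneOn_of_monotoneOn {α : Type*} [LinearOrder α] {f : α → ℝ}
    {a b c : α} (hab : a ≤ b) (hbc : b ≤ c) (hanti : AntitoneOn f (Icc a b))
    (hmono : MonotoneOn f (Icc b c)) :
    eVariationOn f (Icc a c) = .ofReal (f a - f b) + .ofReal (f c - f b) := by
  have hsplit := eVariationOn.Icc_add_Icc f (s := univ) hab hbc (mem_univ b)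
  simp only [univ_inter] at hsplit
  rw [← hsplit, ← inter_self (Icc a b), hanti.eVariationOn_eq ⟨le_rfl, hab⟩ ⟨hab, le_rfl⟩,
    ← inter_self (Icc b c), hmono.eVariationOn_eq ⟨le_rfl, hbc⟩ ⟨hbc, le_rfl⟩]

theorem eVariationOn_max_sq_div_two {c : ℝ} (hc₀ : 0 ≤ c) (hc₁ : c ≤ 1) :
    eVariationOn (fun x : ℝ => max (x ^ 2) c / 2) (Icc (-1) 1) = .ofReal (1 - c) := by
  rw [eVariationOn_Icc_of_antitoneOn_of_monotoneOn (b := 0) (by norm_num) (by norm_num)]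
  · simp only [max_eq_left (by linarith : c ≤ (-1 : ℝ) ^ 2),
      max_eq_left (by linarith : c ≤ (1 : ℝ) ^ 2), max_eq_right (by simpa using hc₀ : (0 : ℝ) ^ 2 ≤ c)]
    rw [← ENNReal.ofReal_add (by linarith) (by linarith)]
    ring_nf
  · intro x hx y hy hxy
    have : y ^ 2 ≤ x ^ 2 := by nlinarith [hx.2, hy.2]
    dsimp only
    gcongr
  · intro x hx y hy hxy
    have : x ^ 2 ≤ y ^ 2 := by nlinarith [hx.1, hy.1]
    dsimp only
    gcongr

theorem eVariationOn_sq_div_two :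
    eVariationOn (fun x : ℝ => x ^ 2 / 2) (Icc (-1) 1) = .ofReal 1 := by
  simpa [max_eq_left (sq_nonneg _)] using eVariationOn_max_sq_div_two le_rfl zero_le_one

theorem abs_integral_mul_le_mul_setIntegral {α : Type*} [MeasurableSpace α] {μ : Measure α}
    {w g : α → ℝ} {s : Set α} {C : ℝ} (hs : MeasurableSet s) (hw : Integrable w μ)
    (hg : ∀ x, |g x| ≤ C) (hgs : ∀ x ∉ s, g x = 0) :
    |∫ x, w x * g x ∂μ| ≤ C * ∫ x in s, |w x| ∂μ := by
  have hpoint : ∀ x, |w x * g x| ≤ C * s.indicator (fun x => |w x|) x := by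
    intro x
    by_cases hx : x ∈ s
    · rw [indicator_of_mem hx, abs_mul, mul_comm C]
      exact mul_le_mul_of_nonneg_left (hg x) (abs_nonneg _)
    · rw [indicator_of_notMem hx, hgs x hx, mul_zero, abs_zero, mul_zero]
  calc |∫ x, w x * g x ∂μ| ≤ ∫ x, |w x * g x| ∂μ := abs_integral_le_integral_abs
    _ ≤ ∫ x, C * s.indicator (fun x => |w x|) x ∂μ :=
      integral_mono_of_nonneg (.of_forall fun x => abs_nonneg _)
        ((hw.abs.indicator hs).const_mul C) (.of_forall hpoint)
    _ = C * ∫ x in s, |w x| ∂μ := by rw [integral_const_mul, integral_indicator hs]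

theorem MeasureTheory.Integrable.tendsto_setIntegral_Ioo_neg_self_nhds_zero {t : Set ℝ} {f : ℝ → ℝ}
    (hf : Integrable f (volume.restrict t)) :
    Tendsto (fun δ => ∫ x in Ioo (-δ) δ, f x ∂volume.restrict t) (𝓝 0) (𝓝 0) := by
  refine hf.tendsto_setIntegral_nhds_zero ?_
  have hvol : Tendsto (fun δ : ℝ => ENNReal.ofReal (2 * δ)) (𝓝 0) (𝓝 0) := by
    simpa using ENNReal.tendsto_ofReal ((continuous_const_mul (2 : ℝ)).tendsto 0)
  refine tendsto_of_tendsto_of_tendsto_of_le_of_le tendsto_const_nhds hvol (fun _ => zero_le) ?_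
  intro δ
  calc volume.restrict t (Ioo (-δ) δ) ≤ volume (Ioo (-δ) δ) := Measure.restrict_apply_le _ _
    _ = ENNReal.ofReal (2 * δ) := by rw [Real.volume_Ioo]; ring_nf

noncomputable def valleyFill (δ x : ℝ) : ℝ := max (δ ^ 2 - x ^ 2) 0 / 2

theorem sq_div_two_add_valleyFill (δ x : ℝ) :
    x ^ 2 / 2 + valleyFill δ x = max (x ^ 2) (δ ^ 2) / 2 := by
  unfold valleyFill
  rcases le_total (δ ^ 2) (x ^ 2) with h | h
  · rw [max_eq_right (by linarith), max_eq_left h]; ring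
  · rw [max_eq_left (by linarith), max_eq_right h]; ring

theorem valleyFill_eq_zero {δ x : ℝ} (h : |δ| ≤ |x|) : valleyFill δ x = 0 := by
  rw [valleyFill, max_eq_right (sub_nonpos.mpr (sq_le_sq.mpr h)), zero_div]

theorem abs_valleyFill_le (δ x : ℝ) : |valleyFill δ x| ≤ δ ^ 2 / 2 := by
  unfold valleyFill
  rw [abs_of_nonneg (by positivity)]
  gcongr
  exact max_le (by nlinarith [sq_nonneg x]) (sq_nonneg δ)

theorem continuous_valleyFill (δ : ℝ) : Continuous (valleyFill δ) := by
  unfold valleyFill; fun_prop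

/-- The function `v(x) = x²/2` on `[-1,1]` does not belong to the domain of the
subdifferential of the total variation functional `J` (with Dirichlet boundary values
`v(-1) = v(1) = 1/2`): there is no `w ∈ L²(-1,1)` such that for all perturbations `h ∈ L²`
with `v + h` of bounded variation and the same boundary values,
`J(v+h) - J(v) ≥ ∫ w·h`. -/
theorem x_sq_over_two_not_in_domain_of_subdifferential :
    ¬ ∃ w : ℝ → ℝ, MemLp w 2 (volume.restrict (Ioo (-1 : ℝ) 1)) ∧
      ∀ h : ℝ → ℝ, MemLp h 2 (volume.restrict (Ioo (-1 : ℝ) 1)) →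
        BoundedVariationOn (fun x => x ^ 2 / 2 + h x) (Icc (-1 : ℝ) 1) →
        h (-1) = 0 → h 1 = 0 →
        (eVariationOn (fun x => x ^ 2 / 2 + h x) (Icc (-1 : ℝ) 1)).toReal
            - (eVariationOn (fun x : ℝ => x ^ 2 / 2) (Icc (-1 : ℝ) 1)).toReal
          ≥ ∫ x in Ioo (-1 : ℝ) 1, w x * h x := by
  rintro ⟨w, hw, hsub⟩
  have hwi := hw.integrable one_le_two
  obtain ⟨δ, ⟨hsmall, hδ₁⟩, hδ₀ : 0 < δ⟩ : ∃ δ,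
      ((∫ x in Ioo (-δ) δ, |w x| ∂volume.restrict (Ioo (-1) 1)) < 2 ∧ δ < 1) ∧ δ ∈ Ioi 0 :=
    ((hwi.abs.tendsto_setIntegral_Ioo_neg_self_nhds_zero.eventually_lt_const two_pos).and
      (eventually_lt_nhds one_pos) |>.filter_mono nhdsWithin_le_nhds |>.and
      self_mem_nhdsWithin).exists (f := 𝓝[>] 0)
  have hvar : eVariationOn (fun x => x ^ 2 / 2 + valleyFill δ x) (Icc (-1) 1)
      = .ofReal (1 - δ ^ 2) := by
    simp_rw [sq_div_two_add_valleyFill]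
    exact eVariationOn_max_sq_div_two (sq_nonneg δ) (by nlinarith)
  have hsubgrad := hsub (valleyFill δ)
    (.of_bound (continuous_valleyFill δ).aestronglyMeasurable _ (.of_forall (abs_valleyFill_le δ)))
    (by rw [BoundedVariationOn, hvar]; exact ENNReal.ofReal_ne_top)
    (valleyFill_eq_zero (by simpa [abs_of_pos hδ₀] using hδ₁.le))
    (valleyFill_eq_zero (by simpa [abs_of_pos hδ₀] using hδ₁.le))
  rw [hvar, eVariationOn_sq_div_two, ENNReal.toReal_ofReal (by nlinarith),
    ENNReal.toReal_ofReal zero_le_one] at hsubgrad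
  have hpairing := abs_integral_mul_le_mul_setIntegral measurableSet_Ioo hwi (abs_valleyFill_le δ)
    fun x hx => valleyFill_eq_zero (by
      rw [abs_of_pos hδ₀]; exact not_lt.mp fun h => hx (abs_lt.mp h))
  nlinarith [neg_abs_le (∫ x in Ioo (-1 : ℝ) 1, w x * valleyFill δ x), sq_pos_of_pos hδ₀]
end

section
/- For any v ∈ L²(a,b) and h > 0, there exists a unique minimizer u ∈ BV(a,b) (with the prescribed boundary values) of J_{h,v}(u) = h·∫_a^b |Du| + (1/2)∫_a^b (u-v)² dx, and moreover the total variation of u satisfies ∫_a^b |Du| ≤ |B - A| + (1/(2h))∫_a^b (v - ℓ)² dx, where ℓ is the affine function with ℓ(a)=A, ℓ(b)=B. -/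
/-!
Direct method and strict convexity. Along a minimising sequence the energies are bounded, hence
so are the total variations and, since every competitor equals `A` at `a`, the sup norms on
`[a, b]`. Helly's selection theorem (monotone case, then the Jordan decomposition
`f = V_a^x f - (V_a^x f - f)`) extracts a subsequence converging at every point of `[a, b]`;
the variation is lower semicontinuous under pointwise convergence and the fidelity term converges
by dominated convergence, so the limit is a minimiser. For two minimisers `u, u'` the variation
is convex and the fidelity obeys the parallelogram identity, so the midpoint has energy at most
the minimum minus `(1/8) ∫ (u - u')²`, which forces `u = u'` a.e. Comparing with the affine
interpolant `ℓ`, whose variation is `|B - A|`, gives the bound.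
-/

open MeasureTheory Set Filter Topology
open scoped ENNReal

namespace eVariationOn

variable {α : Type*} [LinearOrder α]

theorem add_le {E : Type*} [SeminormedAddCommGroup E] (f g : α → E) (s : Set α) :
    eVariationOn (f + g) s ≤ eVariationOn f s + eVariationOn g s := by
  refine iSup_le fun ⟨n, u, hu, us⟩ => ?_
  calc ∑ i ∈ Finset.range n, edist ((f + g) (u (i + 1))) ((f + g) (u i))
      ≤ ∑ i ∈ Finset.range n,
          (edist (f (u (i + 1))) (f (u i)) + edist (g (u (i + 1))) (g (u i))) :=
        Finset.sum_le_sum fun i _ => edist_add_add_le _ _ _ _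
    _ ≤ eVariationOn f s + eVariationOn g s := by
        rw [Finset.sum_add_distrib]
        exact add_le_add (sum_le hu us) (sum_le hu us)

theorem const_smul_le {E : Type*} [SeminormedAddCommGroup E] [NormedSpace ℝ E]
    (c : ℝ) (f : α → E) (s : Set α) :
    eVariationOn (c • f) s ≤ ‖c‖₊ * eVariationOn f s :=
  (lipschitzWith_smul c).lipschitzOnWith.comp_eVariationOn_le (g := f) (mapsTo_univ _ _)

theorem le_ofReal_of_tendsto {E : Type*} [PseudoEMetricSpace E] {ι : Type*} {p : Filter ι}
    [p.NeBot] {F : ι → α → E} {f : α → E} {s : Set α}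
    (hF : ∀ i, BoundedVariationOn (F i) s)
    (hconv : ∀ x ∈ s, Tendsto (fun i => F i x) p (𝓝 (f x))) {V : ℝ}
    (hV : Tendsto (fun i => (eVariationOn (F i) s).toReal) p (𝓝 V)) :
    eVariationOn f s ≤ ENNReal.ofReal V := by
  by_contra! hlt
  obtain ⟨c, hVc, hc⟩ := exists_between hlt
  have hc_top : c ≠ ∞ := hc.ne_top
  have hle : c.toReal ≤ V := ge_of_tendsto hV <|
    (lowerSemicontinuous_aux hconv hc).mono fun i hi => (ENNReal.toReal_strict_mono (hF i) hi).le
  exact hVc.not_ge <|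
    (ENNReal.le_ofReal_iff_toReal_le hc_top (ENNReal.toReal_nonneg.trans hle)).2 hle

end eVariationOn

theorem eVariationOn_midpoint_le {α : Type*} [LinearOrder α] (f g : α → ℝ) (s : Set α) :
    eVariationOn (fun x => (f x + g x) / 2) s ≤ (eVariationOn f s + eVariationOn g s) / 2 := by
  have hmid : (fun x => (f x + g x) / 2) = (2⁻¹ : ℝ) • (f + g) := by
    funext x
    simp [div_eq_inv_mul]
  rw [hmid, ENNReal.div_eq_inv_mul]
  refine (eVariationOn.const_smul_le _ _ s).trans ?_
  gcongr
  · simp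
  · exact eVariationOn.add_le f g s

namespace BoundedVariationOn

theorem abs_le_abs_add {f : ℝ → ℝ} {s : Set ℝ} (hf : BoundedVariationOn f s) {x y : ℝ}
    (hx : x ∈ s) (hy : y ∈ s) : |f x| ≤ |f y| + (eVariationOn f s).toReal := by
  have := hf.dist_le hx hy
  rw [Real.dist_eq] at this
  linarith [abs_sub_abs_le_abs_sub (f x) (f y)]

theorem aemeasurable_restrict {f : ℝ → ℝ} {s : Set ℝ} (hf : BoundedVariationOn f s)
    (hs : MeasurableSet s) {μ : Measure ℝ} : AEMeasurable f (μ.restrict s) := by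
  obtain ⟨p, q, hp, hq, rfl⟩ := hf.locallyBoundedVariationOn.exists_monotoneOn_sub_monotoneOn
  exact (aemeasurable_restrict_of_monotoneOn hs hp).sub (aemeasurable_restrict_of_monotoneOn hs hq)

theorem memLp_restrict {f : ℝ → ℝ} {s : Set ℝ} (hf : BoundedVariationOn f s)
    (hs : MeasurableSet s) {μ : Measure ℝ} [IsFiniteMeasure (μ.restrict s)] (p : ℝ≥0∞) :
    MemLp f p (μ.restrict s) := by
  rcases s.eq_empty_or_nonempty with rfl | ⟨y, hy⟩
  · simp
  refine MemLp.of_bound (hf.aemeasurable_restrict hs).aestronglyMeasurable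
    (|f y| + (eVariationOn f s).toReal) ?_
  filter_upwards [ae_restrict_mem hs] with x hx
  exact hf.abs_le_abs_add hx hy

end BoundedVariationOn

theorem exists_strictMono_subseq_tendsto_of_countable {α : Type*} {D : Set α} (hD : D.Countable)
    {C : ℝ} {F : ℕ → α → ℝ} (hF : ∀ n, ∀ x ∈ D, |F n x| ≤ C) :
    ∃ φ : ℕ → ℕ, StrictMono φ ∧ ∃ g : α → ℝ,
      ∀ x ∈ D, Tendsto (fun n => F (φ n) x) atTop (𝓝 (g x)) := by
  have := hD.to_subtype
  let T : ℕ → D → Icc (-C) C := fun n x => ⟨F n x, abs_le.1 (hF n x x.2)⟩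
  obtain ⟨L, φ, hφ, hT⟩ := CompactSpace.tendsto_subseq T
  classical
  refine ⟨φ, hφ, fun x => if hx : x ∈ D then L ⟨x, hx⟩ else 0, fun x hx => ?_⟩
  have hTx := (continuous_apply ⟨x, hx⟩).tendsto L |>.comp hT
  simpa [hx, T, Function.comp_def] using (continuous_subtype_val.tendsto _).comp hTx

theorem tendsto_of_monotoneOn_of_squeeze {s : Set ℝ} {F : ℕ → ℝ → ℝ}
    (hF : ∀ n, MonotoneOn (F n) s) {x c : ℝ} (hx : x ∈ s)
    (hlow : ∀ c' < c, ∃ d ∈ s, d ≤ x ∧ ∀ᶠ n in atTop, c' < F n d)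
    (hup : ∀ c' > c, ∃ d ∈ s, x ≤ d ∧ ∀ᶠ n in atTop, F n d < c') :
    Tendsto (fun n => F n x) atTop (𝓝 c) := by
  refine tendsto_order.2 ⟨fun c' hc' => ?_, fun c' hc' => ?_⟩
  · obtain ⟨d, hd, hdx, hev⟩ := hlow c' hc'
    filter_upwards [hev] with n hn using hn.trans_le (hF n hd hx hdx)
  · obtain ⟨d, hd, hxd, hev⟩ := hup c' hc'
    filter_upwards [hev] with n hn using (hF n hx hd hxd).trans_lt hn

theorem countable_setOf_lt_of_le_of_lt {s : Set ℝ} {L U : ℝ → ℝ}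
    (h : ∀ x ∈ s, ∀ y ∈ s, x < y → U x ≤ L y) : {x ∈ s | L x < U x}.Countable := by
  refine Set.PairwiseDisjoint.countable_of_isOpen (s := fun x => Ioo (L x) (U x))
    (fun x hx y hy hxy => ?_) (fun _ _ => isOpen_Ioo) (fun x hx => nonempty_Ioo.2 hx.2)
  wlog hlt : x < y generalizing x y
  · exact (this y hy x hx hxy.symm (hxy.symm.lt_of_le (not_lt.1 hlt))).symm
  simp only [Function.onFun, Ioo_disjoint_Ioo]
  exact (min_le_left _ _).trans ((h x hx.1 y hy.1 hlt).trans (le_max_right _ _))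

/-- With `L x = sup g` over `D ∩ (-∞, x]` and `U x = inf g` over `D ∩ [x, ∞)`, monotonicity
squeezes `F n x` to `L x` whenever `L x = U x`; the remaining points carry pairwise disjoint
intervals `(L x, U x)`. -/
theorem exists_countable_tendsto_of_monotoneOn {a b : ℝ} {D : Set ℝ} (hD : D ⊆ Icc a b)
    (ha : a ∈ D) (hb : b ∈ D) (hdense : ∀ x ∈ Icc a b, ∀ y ∈ Icc a b, x < y →
      ∃ d ∈ D, x ≤ d ∧ d ≤ y)
    {F : ℕ → ℝ → ℝ} (hF : ∀ n, MonotoneOn (F n) (Icc a b)) {g : ℝ → ℝ}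
    (hg : ∀ x ∈ D, Tendsto (fun n => F n x) atTop (𝓝 (g x))) :
    ∃ E : Set ℝ, E.Countable ∧ ∃ G : ℝ → ℝ,
      ∀ x ∈ Icc a b \ E, Tendsto (fun n => F n x) atTop (𝓝 (G x)) := by
  have hg_mono : MonotoneOn g D := fun x hx y hy hxy =>
    le_of_tendsto_of_tendsto' (hg x hx) (hg y hy) fun n => hF n (hD hx) (hD hy) hxy
  set L : ℝ → ℝ := fun x => sSup (g '' (D ∩ Iic x))
  set U : ℝ → ℝ := fun x => sInf (g '' (D ∩ Ici x))
  have hL_bdd : ∀ x, BddAbove (g '' (D ∩ Iic x)) := fun x =>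
    ⟨g b, by rintro _ ⟨d, hd, rfl⟩; exact hg_mono hd.1 hb (hD hd.1).2⟩
  have hU_bdd : ∀ x, BddBelow (g '' (D ∩ Ici x)) := fun x =>
    ⟨g a, by rintro _ ⟨d, hd, rfl⟩; exact hg_mono ha hd.1 (hD hd.1).1⟩
  have hL_ne : ∀ x ∈ Icc a b, (g '' (D ∩ Iic x)).Nonempty := fun x hx =>
    ⟨g a, a, ⟨ha, hx.1⟩, rfl⟩
  have hU_ne : ∀ x ∈ Icc a b, (g '' (D ∩ Ici x)).Nonempty := fun x hx =>
    ⟨g b, b, ⟨hb, hx.2⟩, rfl⟩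
  have hLU : ∀ x ∈ Icc a b, L x ≤ U x := by
    rintro x hx
    refine csSup_le (hL_ne x hx) ?_
    rintro _ ⟨d, ⟨hd, hdx⟩, rfl⟩
    refine le_csInf (hU_ne x hx) ?_
    rintro _ ⟨d', ⟨hd', hxd'⟩, rfl⟩
    exact hg_mono hd hd' (hdx.trans hxd')
  have hUL : ∀ x ∈ Icc a b, ∀ y ∈ Icc a b, x < y → U x ≤ L y := by
    intro x hx y hy hxy
    obtain ⟨d, hd, hxd, hdy⟩ := hdense x hx y hy hxy
    exact (csInf_le (hU_bdd x) ⟨d, ⟨hd, hxd⟩, rfl⟩).trans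
      (le_csSup (hL_bdd y) ⟨d, ⟨hd, hdy⟩, rfl⟩)
  refine ⟨{x ∈ Icc a b | L x < U x}, countable_setOf_lt_of_le_of_lt hUL, L, ?_⟩
  rintro x ⟨hx, hxE⟩
  have hLU_eq : L x = U x := (hLU x hx).antisymm (not_lt.1 fun h => hxE ⟨hx, h⟩)
  refine tendsto_of_monotoneOn_of_squeeze hF hx (fun c hc => ?_) (fun c hc => ?_)
  · obtain ⟨_, ⟨d, ⟨hd, hdx⟩, rfl⟩, hcd⟩ := exists_lt_of_lt_csSup (hL_ne x hx) hc
    exact ⟨d, hD hd, hdx, (hg d hd).eventually_const_lt hcd⟩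
  · rw [hLU_eq] at hc
    obtain ⟨_, ⟨d, ⟨hd, hxd⟩, rfl⟩, hdc⟩ := exists_lt_of_csInf_lt (hU_ne x hx) hc
    exact ⟨d, hD hd, hxd, (hg d hd).eventually_lt_const hdc⟩

theorem exists_strictMono_subseq_tendsto_of_monotoneOn {a b C : ℝ} (hab : a ≤ b)
    {F : ℕ → ℝ → ℝ} (hF : ∀ n, MonotoneOn (F n) (Icc a b))
    (hC : ∀ n, ∀ x ∈ Icc a b, |F n x| ≤ C) :
    ∃ φ : ℕ → ℕ, StrictMono φ ∧ ∃ g : ℝ → ℝ,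
      ∀ x ∈ Icc a b, Tendsto (fun n => F (φ n) x) atTop (𝓝 (g x)) := by
  set D : Set ℝ := insert a (insert b (Icc a b ∩ range ((↑) : ℚ → ℝ)))
  have hD : D ⊆ Icc a b :=
    insert_subset (left_mem_Icc.2 hab) (insert_subset (right_mem_Icc.2 hab) inter_subset_left)
  have hD_countable : D.Countable :=
    ((countable_range _).mono inter_subset_right).insert b |>.insert a
  have hdense : ∀ x ∈ Icc a b, ∀ y ∈ Icc a b, x < y → ∃ d ∈ D, x ≤ d ∧ d ≤ y := by
    intro x hx y hy hxy
    obtain ⟨q, hxq, hqy⟩ := exists_rat_btwn hxy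
    exact ⟨q, .inr (.inr ⟨⟨hx.1.trans hxq.le, hqy.le.trans hy.2⟩, q, rfl⟩), hxq.le, hqy.le⟩
  obtain ⟨φ₁, hφ₁, g₁, hg₁⟩ :=
    exists_strictMono_subseq_tendsto_of_countable hD_countable fun n x hx => hC n x (hD hx)
  obtain ⟨E, hE, G, hG⟩ := exists_countable_tendsto_of_monotoneOn hD (mem_insert a _)
    (mem_insert_of_mem a (mem_insert b _)) hdense (fun n => hF (φ₁ n)) hg₁
  obtain ⟨φ₂, hφ₂, g₂, hg₂⟩ := exists_strictMono_subseq_tendsto_of_countable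
    (hE.mono inter_subset_left : (E ∩ Icc a b).Countable) fun n x hx => hC (φ₁ n) x hx.2
  classical
  refine ⟨φ₁ ∘ φ₂, hφ₁.comp hφ₂, fun x => if x ∈ E then g₂ x else G x, fun x hx => ?_⟩
  by_cases hxE : x ∈ E
  · simpa [hxE] using hg₂ x ⟨hxE, hx⟩
  · simpa [hxE, Function.comp_def] using (hG x ⟨hx, hxE⟩).comp hφ₂.tendsto_atTop

theorem exists_strictMono_subseq_tendsto_of_boundedVariationOn {a b C V : ℝ} (hab : a ≤ b)
    {F : ℕ → ℝ → ℝ} (hF : ∀ n, BoundedVariationOn (F n) (Icc a b))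
    (hV : ∀ n, (eVariationOn (F n) (Icc a b)).toReal ≤ V) (hC : ∀ n, |F n a| ≤ C) :
    ∃ φ : ℕ → ℕ, StrictMono φ ∧ ∃ g : ℝ → ℝ,
      ∀ x ∈ Icc a b, Tendsto (fun n => F (φ n) x) atTop (𝓝 (g x)) := by
  have ha : a ∈ Icc a b := left_mem_Icc.2 hab
  set P : ℕ → ℝ → ℝ := fun n => variationOnFromTo (F n) (Icc a b) a
  have hP_abs : ∀ n, ∀ x ∈ Icc a b, |P n x| ≤ V := by
    intro n x hx
    rw [show P n x = _ from variationOnFromTo.eq_of_le _ _ hx.1,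
      abs_of_nonneg ENNReal.toReal_nonneg]
    exact (ENNReal.toReal_mono (hF n) (eVariationOn.mono _ inter_subset_left)).trans (hV n)
  have hF_abs : ∀ n, ∀ x ∈ Icc a b, |F n x| ≤ C + V := fun n x hx =>
    ((hF n).abs_le_abs_add hx ha).trans (add_le_add (hC n) (hV n))
  obtain ⟨φ₁, hφ₁, g₁, hg₁⟩ := exists_strictMono_subseq_tendsto_of_monotoneOn hab
    (fun n => variationOnFromTo.monotoneOn (hF n).locallyBoundedVariationOn ha) hP_abs
  obtain ⟨φ₂, hφ₂, g₂, hg₂⟩ := exists_strictMono_subseq_tendsto_of_monotoneOn hab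
    (F := fun n => P (φ₁ n) - F (φ₁ n))
    (fun n => variationOnFromTo.sub_self_monotoneOn (hF (φ₁ n)).locallyBoundedVariationOn ha)
    (C := V + (C + V)) fun n x hx =>
      (abs_sub _ _).trans (add_le_add (hP_abs _ x hx) (hF_abs _ x hx))
  refine ⟨φ₁ ∘ φ₂, hφ₁.comp hφ₂, g₁ - g₂, fun x hx => ?_⟩
  simpa [P] using ((hg₁ x hx).comp hφ₂.tendsto_atTop).sub (hg₂ x hx)

section Fidelity

variable {α : Type*} [MeasurableSpace α] {μ : Measure α} {v : α → ℝ}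

theorem tendsto_integral_sq_sub [IsFiniteMeasure μ] (hv : MemLp v 2 μ) {F : ℕ → α → ℝ}
    {g : α → ℝ} {C : ℝ} (hF : ∀ n, AEStronglyMeasurable (F n) μ)
    (hC : ∀ n, ∀ᵐ x ∂μ, |F n x| ≤ C)
    (hconv : ∀ᵐ x ∂μ, Tendsto (fun n => F n x) atTop (𝓝 (g x))) :
    Tendsto (fun n => ∫ x, (F n x - v x) ^ 2 ∂μ) atTop (𝓝 (∫ x, (g x - v x) ^ 2 ∂μ)) := by
  refine tendsto_integral_of_dominated_convergence (fun x => (C + |v x|) ^ 2)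
    (fun n => ((hF n).sub hv.1).pow 2) ((memLp_const C).add hv.abs).integrable_sq
    (fun n => ?_) ?_
  · filter_upwards [hC n] with x hx
    rw [Real.norm_eq_abs, abs_of_nonneg (sq_nonneg _), ← sq_abs]
    exact pow_le_pow_left₀ (abs_nonneg _) ((abs_sub _ _).trans (by linarith)) 2
  · filter_upwards [hconv] with x hx using (hx.sub_const _).pow 2

theorem integral_midpoint_sub_sq {u w : α → ℝ} (hu : MemLp u 2 μ) (hw : MemLp w 2 μ)
    (hv : MemLp v 2 μ) :
    ∫ x, ((u x + w x) / 2 - v x) ^ 2 ∂μ =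
      (∫ x, (u x - v x) ^ 2 ∂μ) / 2 + (∫ x, (w x - v x) ^ 2 ∂μ) / 2
        - (∫ x, (u x - w x) ^ 2 ∂μ) / 4 := by
  have huv : Integrable (fun x => (u x - v x) ^ 2) μ := (hu.sub hv).integrable_sq
  have hwv : Integrable (fun x => (w x - v x) ^ 2) μ := (hw.sub hv).integrable_sq
  have huw : Integrable (fun x => (u x - w x) ^ 2) μ := (hu.sub hw).integrable_sq
  calc ∫ x, ((u x + w x) / 2 - v x) ^ 2 ∂μ
      = ∫ x, ((u x - v x) ^ 2 / 2 + (w x - v x) ^ 2 / 2 - (u x - w x) ^ 2 / 4) ∂μ := by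
        congr 1 with x
        ring
    _ = _ := by
        rw [integral_sub ((huv.div_const _).fun_add (hwv.div_const _)) (huw.div_const _),
          integral_add (huv.div_const _) (hwv.div_const _), integral_div, integral_div,
          integral_div]

end Fidelity

noncomputable def affineInterp (a b A B x : ℝ) : ℝ := A + (B - A) * (x - a) / (b - a)

theorem eVariationOn_affineInterp_le {a b : ℝ} (hab : a ≤ b) (A B : ℝ) :
    eVariationOn (affineInterp a b A B) (Icc a b) ≤ ENNReal.ofReal |B - A| := by
  set m := (B - A) / (b - a)
  have hlip : LipschitzWith ‖m‖₊ (affineInterp a b A B) := by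
    refine LipschitzWith.of_dist_le_mul fun x y => le_of_eq ?_
    rw [coe_nnnorm, Real.norm_eq_abs, Real.dist_eq, Real.dist_eq, ← abs_mul]
    congr 1
    simp only [affineInterp, m]
    ring
  calc eVariationOn (affineInterp a b A B ∘ id) (Icc a b)
      ≤ ‖m‖₊ * eVariationOn id (Icc a b) :=
        hlip.lipschitzOnWith.comp_eVariationOn_le (mapsTo_univ _ _)
    _ = ENNReal.ofReal (|m| * (b - a)) := by
        rw [eVariationOn_id_Icc, ENNReal.ofReal_mul (abs_nonneg m), ← Real.enorm_eq_ofReal_abs]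
        rfl
    _ ≤ ENNReal.ofReal |B - A| := by
        refine ENNReal.ofReal_le_ofReal ?_
        rcases hab.eq_or_lt with rfl | hlt
        · simp
        · rw [abs_div, abs_of_pos (sub_pos.2 hlt), div_mul_cancel₀ _ (sub_pos.2 hlt).ne']

def bvWithBoundaryValues (a b A B : ℝ) : Set (ℝ → ℝ) :=
  {u | BoundedVariationOn u (Icc a b) ∧ u a = A ∧ u b = B}

theorem affineInterp_mem_bvWithBoundaryValues {a b : ℝ} (hab : a < b) (A B : ℝ) :
    affineInterp a b A B ∈ bvWithBoundaryValues a b A B :=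
  ⟨ne_top_of_le_ne_top ENNReal.ofReal_ne_top (eVariationOn_affineInterp_le hab.le A B),
    by simp [affineInterp], by simp [affineInterp, (sub_pos.2 hab).ne']⟩

theorem midpoint_mem_bvWithBoundaryValues {a b A B : ℝ} {u w : ℝ → ℝ}
    (hu : u ∈ bvWithBoundaryValues a b A B) (hw : w ∈ bvWithBoundaryValues a b A B) :
    (fun x => (u x + w x) / 2) ∈ bvWithBoundaryValues a b A B := by
  obtain ⟨hu, hua, hub⟩ := hu
  obtain ⟨hw, hwa, hwb⟩ := hw
  refine ⟨ne_top_of_le_ne_top ?_ (eVariationOn_midpoint_le u w _), by simp [hua, hwa],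
    by simp [hub, hwb]⟩
  exact ENNReal.div_ne_top (ENNReal.add_ne_top.2 ⟨hu, hw⟩) two_ne_zero

/-- The paper's `J_{h,v}`, with `∫ |Du|` read as the pointwise variation on `[a, b]`. -/
noncomputable def tvEnergy (a b h : ℝ) (v u : ℝ → ℝ) : ℝ :=
  h * (eVariationOn u (Icc a b)).toReal + (1 / 2) * ∫ x in a..b, (u x - v x) ^ 2

section Energy

variable {a b h : ℝ} {v : ℝ → ℝ}

theorem tvEnergy_nonneg (hab : a ≤ b) (hh : 0 ≤ h) (u : ℝ → ℝ) : 0 ≤ tvEnergy a b h v u :=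
  add_nonneg (mul_nonneg hh ENNReal.toReal_nonneg) <|
    mul_nonneg one_half_pos.le (intervalIntegral.integral_nonneg hab fun _ _ => sq_nonneg _)

theorem tvEnergy_le_of_tendsto (hab : a ≤ b) (hh : 0 < h)
    (hv : MemLp v 2 (volume.restrict (Ioo a b))) {F : ℕ → ℝ → ℝ} {u : ℝ → ℝ} {C m : ℝ}
    (hF : ∀ n, BoundedVariationOn (F n) (Icc a b)) (hC : ∀ n, ∀ x ∈ Icc a b, |F n x| ≤ C)
    (hconv : ∀ x ∈ Icc a b, Tendsto (fun n => F n x) atTop (𝓝 (u x)))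
    (hm : Tendsto (fun n => tvEnergy a b h v (F n)) atTop (𝓝 m)) :
    BoundedVariationOn u (Icc a b) ∧ tvEnergy a b h v u ≤ m := by
  set fid : (ℝ → ℝ) → ℝ := fun f => ∫ x in a..b, (f x - v x) ^ 2
  have hfid : Tendsto (fun n => fid (F n)) atTop (𝓝 (fid u)) := by
    simp only [fid, intervalIntegral.integral_of_le hab, integral_Ioc_eq_integral_Ioo]
    refine tendsto_integral_sq_sub hv (C := C) (fun n => ?_) (fun n => ?_) ?_
    · exact ((hF n).mono Ioo_subset_Icc_self).aemeasurable_restrict measurableSet_Ioo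
        |>.aestronglyMeasurable
    · filter_upwards [ae_restrict_mem measurableSet_Ioo] with x hx
      exact hC n x (Ioo_subset_Icc_self hx)
    · filter_upwards [ae_restrict_mem measurableSet_Ioo] with x hx
      exact hconv x (Ioo_subset_Icc_self hx)
  set V := (m - fid u / 2) / h
  have hvar : Tendsto (fun n => (eVariationOn (F n) (Icc a b)).toReal) atTop (𝓝 V) := by
    have hsplit : ∀ n, (eVariationOn (F n) (Icc a b)).toReal
        = (tvEnergy a b h v (F n) - fid (F n) / 2) / h := by
      intro n
      simp only [tvEnergy, fid]
      field_simp
      ring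
    simp only [hsplit]
    exact (hm.sub (hfid.div_const 2)).div_const h
  have hV_nonneg : 0 ≤ V := ge_of_tendsto' hvar fun n => ENNReal.toReal_nonneg
  have hu_var := eVariationOn.le_ofReal_of_tendsto hF hconv hvar
  refine ⟨ne_top_of_le_ne_top ENNReal.ofReal_ne_top hu_var, ?_⟩
  have := mul_le_mul_of_nonneg_left (ENNReal.toReal_le_of_le_ofReal hV_nonneg hu_var) hh.le
  simp only [tvEnergy, V] at this ⊢
  rw [mul_div_cancel₀ _ hh.ne'] at this
  linarith

theorem exists_isMinOn_tvEnergy (hab : a < b) (hh : 0 < h)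
    (hv : MemLp v 2 (volume.restrict (Ioo a b))) (A B : ℝ) :
    ∃ u ∈ bvWithBoundaryValues a b A B,
      IsMinOn (tvEnergy a b h v) (bvWithBoundaryValues a b A B) u := by
  set S := bvWithBoundaryValues a b A B
  have ha : a ∈ Icc a b := left_mem_Icc.2 hab.le
  have hb : b ∈ Icc a b := right_mem_Icc.2 hab.le
  have hne : (tvEnergy a b h v '' S).Nonempty :=
    ⟨_, _, affineInterp_mem_bvWithBoundaryValues hab A B, rfl⟩
  have hbdd : BddBelow (tvEnergy a b h v '' S) :=
    ⟨0, by rintro _ ⟨f, -, rfl⟩; exact tvEnergy_nonneg hab.le hh.le f⟩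
  obtain ⟨e, he_anti, he_lim, he_mem⟩ := exists_seq_tendsto_sInf hne hbdd
  choose W hW hWe using he_mem
  have hW_var : ∀ n, (eVariationOn (W n) (Icc a b)).toReal ≤ e 0 / h := by
    intro n
    have hfid : 0 ≤ ∫ x in a..b, (W n x - v x) ^ 2 :=
      intervalIntegral.integral_nonneg hab.le fun _ _ => sq_nonneg _
    have := he_anti (Nat.zero_le n)
    rw [← hWe n, tvEnergy] at this
    rw [le_div_iff₀ hh]
    linarith
  have hW_abs : ∀ n, ∀ x ∈ Icc a b, |W n x| ≤ |A| + e 0 / h := fun n x hx =>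
    ((hW n).1.abs_le_abs_add hx ha).trans (by rw [(hW n).2.1]; grw [hW_var n])
  obtain ⟨φ, hφ, u, hu⟩ := exists_strictMono_subseq_tendsto_of_boundedVariationOn hab.le
    (fun n => (hW n).1) hW_var (C := |A|) fun n => by rw [(hW n).2.1]
  have hua : u a = A := tendsto_nhds_unique (hu a ha) (by simp [(hW _).2.1])
  have hub : u b = B := tendsto_nhds_unique (hu b hb) (by simp [(hW _).2.2])
  have hJ : Tendsto (fun n => tvEnergy a b h v (W (φ n))) atTop
      (𝓝 (sInf (tvEnergy a b h v '' S))) := by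
    simp only [hWe]
    exact he_lim.comp hφ.tendsto_atTop
  obtain ⟨hu_bv, hu_le⟩ :=
    tvEnergy_le_of_tendsto hab.le hh hv (fun n => (hW (φ n)).1) (fun n => hW_abs (φ n)) hu hJ
  exact ⟨u, ⟨hu_bv, hua, hub⟩,
    isMinOn_iff.2 fun w hw => hu_le.trans (csInf_le hbdd ⟨w, hw, rfl⟩)⟩

theorem tvEnergy_midpoint_le (hab : a ≤ b) (hh : 0 ≤ h)
    (hv : MemLp v 2 (volume.restrict (Ioo a b))) {u w : ℝ → ℝ}
    (hu : BoundedVariationOn u (Icc a b)) (hw : BoundedVariationOn w (Icc a b)) :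
    tvEnergy a b h v (fun x => (u x + w x) / 2)
      ≤ (tvEnergy a b h v u + tvEnergy a b h v w) / 2 - (∫ x in a..b, (u x - w x) ^ 2) / 8 := by
  have hvar : (eVariationOn (fun x => (u x + w x) / 2) (Icc a b)).toReal
      ≤ ((eVariationOn u (Icc a b)).toReal + (eVariationOn w (Icc a b)).toReal) / 2 := by
    rw [← ENNReal.toReal_add hu hw, ← ENNReal.toReal_ofNat 2, ← ENNReal.toReal_div]
    exact ENNReal.toReal_mono (ENNReal.div_ne_top (ENNReal.add_ne_top.2 ⟨hu, hw⟩) two_ne_zero)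
      (eVariationOn_midpoint_le u w _)
  have hfid := integral_midpoint_sub_sq
    ((hu.mono Ioo_subset_Icc_self).memLp_restrict measurableSet_Ioo 2)
    ((hw.mono Ioo_subset_Icc_self).memLp_restrict measurableSet_Ioo 2) hv
  simp only [tvEnergy, intervalIntegral.integral_of_le hab, integral_Ioc_eq_integral_Ioo]
    at hfid ⊢
  rw [hfid]
  nlinarith [mul_le_mul_of_nonneg_left hvar hh]

theorem ae_eq_of_isMinOn_tvEnergy (hab : a < b) (hh : 0 < h)
    (hv : MemLp v 2 (volume.restrict (Ioo a b))) {A B : ℝ} {u w : ℝ → ℝ}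
    (hu : u ∈ bvWithBoundaryValues a b A B)
    (hu_min : IsMinOn (tvEnergy a b h v) (bvWithBoundaryValues a b A B) u)
    (hw : w ∈ bvWithBoundaryValues a b A B) (hwu : tvEnergy a b h v w ≤ tvEnergy a b h v u) :
    w =ᵐ[volume.restrict (Ioo a b)] u := by
  have hmid := isMinOn_iff.1 hu_min _ (midpoint_mem_bvWithBoundaryValues hw hu)
  have hconv := tvEnergy_midpoint_le hab.le hh.le hv hw.1 hu.1
  have hint_nonpos : ∫ x in Ioo a b, (w x - u x) ^ 2 ≤ 0 := by
    rw [← integral_Ioc_eq_integral_Ioo, ← intervalIntegral.integral_of_le hab.le]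
    linarith
  have hint_zero := (integral_eq_zero_iff_of_nonneg (fun x => sq_nonneg (w x - u x))
    (((hw.1.mono Ioo_subset_Icc_self).memLp_restrict measurableSet_Ioo 2).sub
      ((hu.1.mono Ioo_subset_Icc_self).memLp_restrict measurableSet_Ioo 2)).integrable_sq).1
    (hint_nonpos.antisymm (integral_nonneg fun x => sq_nonneg _))
  filter_upwards [hint_zero] with x hx
  exact sub_eq_zero.1 (pow_eq_zero_iff two_ne_zero |>.1 hx)

theorem toReal_eVariationOn_le_of_isMinOn (hab : a < b) (hh : 0 < h) {A B : ℝ} {u : ℝ → ℝ}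
    (hu_min : IsMinOn (tvEnergy a b h v) (bvWithBoundaryValues a b A B) u) :
    (eVariationOn u (Icc a b)).toReal
      ≤ |B - A| + 1 / (2 * h) * ∫ x in a..b, (v x - affineInterp a b A B x) ^ 2 := by
  have hmin := isMinOn_iff.1 hu_min _ (affineInterp_mem_bvWithBoundaryValues hab A B)
  have hvar := ENNReal.toReal_le_of_le_ofReal (abs_nonneg _)
    (eVariationOn_affineInterp_le hab.le A B)
  have hfid : 0 ≤ ∫ x in a..b, (u x - v x) ^ 2 :=
    intervalIntegral.integral_nonneg hab.le fun _ _ => sq_nonneg _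
  simp only [tvEnergy, sub_sq_comm (affineInterp a b A B _)] at hmin
  rw [← mul_le_mul_iff_right₀ hh, mul_add, ← mul_assoc, mul_one_div,
    show h / (2 * h) = 1 / 2 by field_simp]
  nlinarith

end Energy

/-- For any `v ∈ L²(a,b)` and `h > 0` there exists a unique (up to a.e. equality)
minimizer `u ∈ BV[a,b]` with the prescribed boundary values of
`J_{h,v}(u) = h∫|Du| + (1/2)∫(u-v)²`, and its total variation satisfies
`∫|Du| ≤ |B - A| + (1/(2h))∫(v - ℓ)²` where `ℓ` is the affine function with `ℓ(a)=A, ℓ(b)=B`. -/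
theorem exists_unique_minimizer_Jhv (a b A B h : ℝ) (hab : a < b) (hh : 0 < h)
    (v : ℝ → ℝ) (hv : MemLp v 2 (volume.restrict (Ioo a b))) :
    ∃ u : ℝ → ℝ,
      (BoundedVariationOn u (Icc a b) ∧ u a = A ∧ u b = B) ∧
      (∀ w : ℝ → ℝ, BoundedVariationOn w (Icc a b) → w a = A → w b = B →
        h * (eVariationOn u (Icc a b)).toReal + (1 / 2) * ∫ x in a..b, (u x - v x) ^ 2
          ≤ h * (eVariationOn w (Icc a b)).toReal + (1 / 2) * ∫ x in a..b, (w x - v x) ^ 2) ∧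
      (eVariationOn u (Icc a b)).toReal
        ≤ |B - A| + (1 / (2 * h)) *
            ∫ x in a..b, (v x - (A + (B - A) * (x - a) / (b - a))) ^ 2 ∧
      (∀ u' : ℝ → ℝ, (BoundedVariationOn u' (Icc a b) ∧ u' a = A ∧ u' b = B) →
        (∀ w : ℝ → ℝ, BoundedVariationOn w (Icc a b) → w a = A → w b = B →
          h * (eVariationOn u' (Icc a b)).toReal + (1 / 2) * ∫ x in a..b, (u' x - v x) ^ 2
            ≤ h * (eVariationOn w (Icc a b)).toReal + (1 / 2) * ∫ x in a..b, (w x - v x) ^ 2) →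
        ∀ᵐ x ∂(volume.restrict (Ioo a b)), u' x = u x) := by
  obtain ⟨u, hu, hu_min⟩ := exists_isMinOn_tvEnergy hab hh hv A B
  refine ⟨u, hu, fun w hw hwa hwb => isMinOn_iff.1 hu_min w ⟨hw, hwa, hwb⟩,
    toReal_eVariationOn_le_of_isMinOn hab hh hu_min, fun u' hu' hu'_min => ?_⟩
  exact ae_eq_of_isMinOn_tvEnergy hab hh hv hu hu_min hu' (hu'_min u hu.1 hu.2.1 hu.2.2)
end

section
/- No degenerate facets persist: suppose u^λ solves the Yosida-approximated evolution u^λ(t₀+t) = u^λ(t₀) − ∫_{t₀}^{t₀+t} A_λ(u^λ) ds on (0, 1/(3λ)], and suppose for contradiction there is a point a (a degenerate convex facet) and a neighborhood (p,q) such that every u^λ(t₀+t) is convex on (p,q) with strict minimum only at a, and ∫_{a'}^{b'} A_λ(u^λ) dx = −2 for every subinterval (a',b') ∋ a of (p,q). Then ∫_{a'}^{b'} u^λ(t₀+t) = ∫_{a'}^{b'} u^λ(t₀) + 2t, and letting a' , b' → a gives 0 = 2t, a contradiction for t > 0. Hence u^λ(t₀ + 1/(3λ)) has no degenerate facets (L(u^λ_x)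 > 0). -/
open MeasureTheory Set

/-- no degenerate facets persist: suppose `u^λ` solves the
Yosida-approximated evolution `u^λ(t₀+t) = u^λ(t₀) − ∫ A_λ(u^λ)` and there is a point `a`
(a degenerate convex facet) with a neighborhood `(p,q)` such that
`∫_{a'}^{b'} A_λ(u^λ)(·,s) dx = −2` for every subinterval `(a',b') ∋ a` of `(p,q)`. Then
`∫_{a'}^{b'} u^λ(t₀+t) = ∫_{a'}^{b'} u^λ(t₀) + 2t`, and letting `a', b' → a` gives
`0 = 2t`, a contradiction for `t > 0`; hence degenerate facets cannot persist. -/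
theorem no_degenerate_facet_persists (lam t₀ t p q aPt : ℝ)
    (hlam : 0 < lam) (ht : 0 < t) (ht3 : t ≤ 1 / (3 * lam))
    (hpa : p < aPt) (haq : aPt < q)
    (u Alam : ℝ → ℝ → ℝ)  -- arguments: space x, then time s
    -- the integrated Yosida evolution over every subinterval (a',b') of (p,q) containing a
    (hevol : ∀ a' b', p < a' → a' < aPt → aPt < b' → b' < q →
      (∫ x in a'..b', (u x (t₀ + t) - u x t₀))
        = - ∫ s in t₀..(t₀ + t), ∫ x in a'..b', Alam x s)
    -- on a degenerate convex facet, integrating A_λ over any such subinterval gives -2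
    (hflux : ∀ a' b', p < a' → a' < aPt → aPt < b' → b' < q →
      ∀ s ∈ Icc t₀ (t₀ + t), (∫ x in a'..b', Alam x s) = -2)
    -- spatial continuity of the solution near the degenerate facet
    (hcont0 : ContinuousOn (fun x => u x t₀) (Icc p q))
    (hcont1 : ContinuousOn (fun x => u x (t₀ + t)) (Icc p q)) :
    (∀ a' b', p < a' → a' < aPt → aPt < b' → b' < q →
      (∫ x in a'..b', u x (t₀ + t)) = (∫ x in a'..b', u x t₀) + 2 * t) ∧
    False := by
  have hsub : ∀ a' b', p < a' → a' < aPt → aPt < b' → b' < q →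
      uIcc a' b' ⊆ Icc p q := by
    intro a' b' h1 h2 h3 h4
    apply uIcc_subset_Icc <;> constructor <;> linarith
  have key : ∀ a' b', p < a' → a' < aPt → aPt < b' → b' < q →
      (∫ x in a'..b', (u x (t₀ + t) - u x t₀)) = 2 * t := by
    intro a' b' h1 h2 h3 h4
    rw [hevol a' b' h1 h2 h3 h4]
    have : (∫ s in t₀..(t₀ + t), ∫ x in a'..b', Alam x s)
        = ∫ s in t₀..(t₀ + t), (-2 : ℝ) := by
      apply intervalIntegral.integral_congr
      intro s hs
      rw [uIcc_of_le (by linarith : t₀ ≤ t₀ + t)] at hs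
      exact hflux a' b' h1 h2 h3 h4 s hs
    rw [this, intervalIntegral.integral_const]
    simp; ring
  have hint : ∀ a' b', p < a' → a' < aPt → aPt < b' → b' < q →
      IntervalIntegrable (fun x => u x (t₀ + t)) volume a' b' ∧
      IntervalIntegrable (fun x => u x t₀) volume a' b' := by
    intro a' b' h1 h2 h3 h4
    exact ⟨(hcont1.mono (hsub a' b' h1 h2 h3 h4)).intervalIntegrable,
      (hcont0.mono (hsub a' b' h1 h2 h3 h4)).intervalIntegrable⟩
  have part1 : ∀ a' b', p < a' → a' < aPt → aPt < b' → b' < q →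
      (∫ x in a'..b', u x (t₀ + t)) = (∫ x in a'..b', u x t₀) + 2 * t := by
    intro a' b' h1 h2 h3 h4
    obtain ⟨i1, i0⟩ := hint a' b' h1 h2 h3 h4
    have := key a' b' h1 h2 h3 h4
    rw [intervalIntegral.integral_sub i1 i0] at this
    linarith
  refine ⟨part1, ?_⟩
  -- boundedness of g = u(·,t₀+t) - u(·,t₀) on compact Icc p q
  have hg : ContinuousOn (fun x => u x (t₀ + t) - u x t₀) (Icc p q) :=
    hcont1.sub hcont0
  obtain ⟨M, hM⟩ := (isCompact_Icc).exists_bound_of_continuousOn hg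
  have hM0 : 0 ≤ M := le_trans (norm_nonneg _)
    (hM aPt ⟨le_of_lt hpa, le_of_lt haq⟩)
  set δ : ℝ := min ((aPt - p)/2) (min ((q - aPt)/2) (t / (M+1))) with hδdef
  have hδ1 : δ ≤ (aPt - p)/2 := min_le_left _ _
  have hδ2 : δ ≤ (q - aPt)/2 := le_trans (min_le_right _ _) (min_le_left _ _)
  have hδ3 : δ ≤ t / (M+1) := le_trans (min_le_right _ _) (min_le_right _ _)
  have hδ0 : 0 < δ := by
    apply lt_min (by linarith)
    exact lt_min (by linarith) (div_pos ht (by linarith))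
  have h1 : p < aPt - δ := by linarith
  have h2 : aPt - δ < aPt := by linarith
  have h3 : aPt < aPt + δ := by linarith
  have h4 : aPt + δ < q := by linarith
  have hkey := key (aPt - δ) (aPt + δ) h1 h2 h3 h4
  have hbound : ‖∫ x in (aPt - δ)..(aPt + δ), (u x (t₀ + t) - u x t₀)‖
      ≤ M * |(aPt + δ) - (aPt - δ)| := by
    apply intervalIntegral.norm_integral_le_of_norm_le_const
    intro x hx
    apply hM
    exact hsub _ _ h1 h2 h3 h4 (uIoc_subset_uIcc hx)
  rw [hkey] at hbound
  have habs : |(aPt + δ) - (aPt - δ)| = 2 * δ := by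
    rw [abs_of_nonneg (by linarith)]; ring
  rw [habs, Real.norm_eq_abs, abs_of_nonneg (by linarith)] at hbound
  have : M * (2 * δ) ≤ M * (2 * (t / (M+1))) := by
    apply mul_le_mul_of_nonneg_left (by linarith) hM0
  have hlt : M * (2 * (t / (M+1))) < 2 * t := by
    rw [div_eq_mul_inv]
    have hMp : (0:ℝ) < M + 1 := by linarith
    rw [show M * (2 * (t * (M+1)⁻¹)) = (M / (M+1)) * (2 * t) by field_simp]
    have : M / (M+1) < 1 := (div_lt_one hMp).mpr (by linarith)
    nlinarith
  linarith
end

section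
/- Facet position equation for the resolvent: let w be admissible with a convex essential facet whose parameter interval is [a*, b*], and let u = R(λ,A)(λw)/λ solve λu − (sgn u_x)_x = λw with u constant equal to w(a(λ)) on [a(λ), b(λ)] and u = w elsewhere. Then integrating the equation over the facet yields the defining relation (b(λ) − a(λ))·w(a(λ)) = ∫_{a(λ)}^{b(λ)} w dx + 2/λ, together with w(b(λ)) = w(a(λ)). Moreover the function τ ↦ F(τ) = (b̄(τ) − ā(τ))w(ā(τ)) − ∫_{ā(τ)}^{b̄(τ)} w, where ā(τ), b̄(τ) are the extreme preimages of w(a*) + τ on the adjacent monotone pieces of w, is continuous and strictly monotone near τ = 0 with F(0) = 0, so for λ large there is a unique τ(λ) with F(τ(λ)) = 2/λ. -/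
open MeasureTheory Set

/-- facet position equation for the resolvent: for an admissible `w` with a
convex essential facet `[a*,b*]` (strictly decreasing on the left adjacent piece, strictly
increasing on the right one), if `u` solves `λu − (sgn u_x)_x = λw` with `u` constant equal
to `w(a(λ))` on the enlarged facet `[a(λ),b(λ)]` and `u = w` elsewhere, then
`(b(λ)−a(λ))·w(a(λ)) = ∫_{a(λ)}^{b(λ)} w + 2/λ` and `w(b(λ)) = w(a(λ))`. Moreover the
function `F(τ) = (b̄(τ)−ā(τ))·w(ā(τ)) − ∫_{ā(τ)}^{b̄(τ)} w`, built from the extreme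
preimages `ā(τ), b̄(τ)` of `w(a*)+τ` on the adjacent monotone pieces, is continuous and
strictly monotone with `F(0) = 0`, so for `λ` large there is a unique `τ(λ)` with
`F(τ(λ)) = 2/λ`. -/
theorem facet_position_equation (l aStar bStar r τmax : ℝ)
    (h₁ : l < aStar) (h₂ : aStar ≤ bStar) (h₃ : bStar < r) (hτ : 0 < τmax)
    (w : ℝ → ℝ)
    (hwcont : ContinuousOn w (Icc l r))
    -- the convex essential facet structure of w around [a*,b*]
    (hconst : ∀ x ∈ Icc aStar bStar, w x = w aStar)
    (hleft : StrictAntiOn w (Icc l aStar))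
    (hright : StrictMonoOn w (Icc bStar r))
    -- the level w(a*) + τmax is attained on both adjacent monotone pieces
    (hrange : w aStar + τmax ≤ w l ∧ w aStar + τmax ≤ w r) :
    -- Part 1: the defining relation obtained by integrating the equation over the facet
    (∀ (lam alam blam : ℝ) (u : ℝ → ℝ), 0 < lam →
      l ≤ alam → alam ≤ aStar → bStar ≤ blam → blam ≤ r →
      ContinuousOn u (Icc l r) →
      (∀ x ∈ Icc l r, x ∉ Ioo alam blam → u x = w x) →
      (∀ x ∈ Icc alam blam, u x = w alam) →
      (∫ x in alam..blam, lam * (u x - w x)) = 2 →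
      ((blam - alam) * w alam = (∫ x in alam..blam, w x) + 2 / lam ∧ w blam = w alam)) ∧
    -- Part 2: the function F is continuous, strictly monotone, vanishes at 0, and for large
    -- λ the equation F(τ) = 2/λ has a unique solution
    (∃ F : ℝ → ℝ,
      ContinuousOn F (Icc 0 τmax) ∧ StrictMonoOn F (Icc 0 τmax) ∧ F 0 = 0 ∧
      (∀ τ ∈ Icc (0 : ℝ) τmax, ∃ aτ ∈ Icc l aStar, ∃ bτ ∈ Icc bStar r,
        w aτ = w aStar + τ ∧ w bτ = w aStar + τ ∧
        F τ = (bτ - aτ) * w aτ - ∫ x in aτ..bτ, w x) ∧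
      (∀ lam : ℝ, 0 < lam → 2 / lam ≤ F τmax →
        ∃! τ, τ ∈ Icc (0 : ℝ) τmax ∧ F τ = 2 / lam)) := by
  have hwInt : ∀ p q : ℝ, p ∈ Icc l r → q ∈ Icc l r → IntervalIntegrable w volume p q := by
    intro p q hp hq
    exact (hwcont.mono (uIcc_subset_Icc hp hq)).intervalIntegrable
  constructor
  · -- Part 1
    rintro lam alam blam u hlam hla haa hbb hbr hucont huout huconst hint
    have halamb : alam ≤ blam := le_trans haa (le_trans h₂ hbb)
    have hsub : Icc alam blam ⊆ Icc l r := Icc_subset_Icc hla hbr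
    have huIcc : uIcc alam blam = Icc alam blam := uIcc_of_le halamb
    have hwint : IntervalIntegrable w volume alam blam :=
      hwInt alam blam ⟨hla, le_trans halamb hbr⟩ ⟨le_trans hla halamb, hbr⟩
    have huint : IntervalIntegrable u volume alam blam := by
      apply ContinuousOn.intervalIntegrable
      exact hucont.mono (by rw [huIcc]; exact hsub)
    have hIu : (∫ x in alam..blam, u x) = (blam - alam) * w alam := by
      rw [intervalIntegral.integral_congr (g := fun _ => w alam) (by rw [huIcc]; exact huconst)]
      simp [smul_eq_mul]
    have key : lam * ((blam - alam) * w alam - ∫ x in alam..blam, w x) = 2 := by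
      have : (∫ x in alam..blam, lam * (u x - w x)) =
          lam * ((∫ x in alam..blam, u x) - ∫ x in alam..blam, w x) := by
        rw [intervalIntegral.integral_const_mul, intervalIntegral.integral_sub huint hwint]
      rw [this, hIu] at hint
      exact hint
    constructor
    · have hlam' : lam ≠ 0 := ne_of_gt hlam
      field_simp
      nlinarith [key]
    · have hblam : blam ∈ Icc l r := ⟨le_trans hla halamb, hbr⟩
      have h1 : u blam = w blam := huout blam hblam (by simp [mem_Ioo])
      have h2 : u blam = w alam := huconst blam ⟨halamb, le_refl _⟩
      rw [← h1, h2]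
  · -- Part 2
    have hla' : l ≤ aStar := h₁.le
    have hbr' : bStar ≤ r := h₃.le
    have haStarIcc : aStar ∈ Icc l aStar := ⟨hla', le_rfl⟩
    have hbStarIcc : bStar ∈ Icc bStar r := ⟨le_rfl, hbr'⟩
    have hwb : w bStar = w aStar := hconst bStar ⟨h₂, le_rfl⟩
    have hsubL : Icc l aStar ⊆ Icc l r := Icc_subset_Icc le_rfl (le_trans h₂ hbr')
    have hsubR : Icc bStar r ⊆ Icc l r := Icc_subset_Icc (le_trans hla' h₂) le_rfl
    -- the extreme preimages
    have hexA : ∀ τ ∈ Icc (0:ℝ) τmax, ∃ x, x ∈ Icc l aStar ∧ w x = w aStar + τ := by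
      intro τ hτ'
      have hmem : w aStar + τ ∈ Icc (w aStar) (w l) :=
        ⟨by linarith [hτ'.1], by linarith [hτ'.2, hrange.1]⟩
      obtain ⟨x, hx, hwx⟩ := intermediate_value_Icc' hla' (hwcont.mono hsubL) hmem
      exact ⟨x, hx, hwx⟩
    have hexB : ∀ τ ∈ Icc (0:ℝ) τmax, ∃ x, x ∈ Icc bStar r ∧ w x = w aStar + τ := by
      intro τ hτ'
      have hmem : w aStar + τ ∈ Icc (w bStar) (w r) :=
        ⟨by rw [hwb]; linarith [hτ'.1], by linarith [hτ'.2, hrange.2]⟩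
      obtain ⟨x, hx, hwx⟩ := intermediate_value_Icc hbr' (hwcont.mono hsubR) hmem
      exact ⟨x, hx, hwx⟩
    choose! a haI haW using hexA
    choose! b hbI hbW using hexB
    set F : ℝ → ℝ := fun τ => (b τ - a τ) * (w aStar + τ) - ∫ x in a τ..b τ, w x with hF
    -- monotonicity of a, b
    have haMono : ∀ τ₁ ∈ Icc (0:ℝ) τmax, ∀ τ₂ ∈ Icc (0:ℝ) τmax, τ₁ ≤ τ₂ → a τ₂ ≤ a τ₁ := by
      intro τ₁ h1 τ₂ h2 hle
      by_contra hc
      push_neg at hc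
      have := hleft (haI τ₁ h1) (haI τ₂ h2) hc
      rw [haW τ₁ h1, haW τ₂ h2] at this
      linarith
    have haStrict : ∀ τ₁ ∈ Icc (0:ℝ) τmax, ∀ τ₂ ∈ Icc (0:ℝ) τmax, τ₁ < τ₂ → a τ₂ < a τ₁ := by
      intro τ₁ h1 τ₂ h2 hlt
      rcases lt_or_eq_of_le (haMono τ₁ h1 τ₂ h2 hlt.le) with h | h
      · exact h
      · exfalso
        have := haW τ₁ h1
        rw [← h, haW τ₂ h2] at this
        linarith
    have hbMono : ∀ τ₁ ∈ Icc (0:ℝ) τmax, ∀ τ₂ ∈ Icc (0:ℝ) τmax, τ₁ ≤ τ₂ → b τ₁ ≤ b τ₂ := by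
      intro τ₁ h1 τ₂ h2 hle
      by_contra hc
      push_neg at hc
      have := hright (hbI τ₂ h2) (hbI τ₁ h1) hc
      rw [hbW τ₁ h1, hbW τ₂ h2] at this
      linarith
    have hab : ∀ τ ∈ Icc (0:ℝ) τmax, a τ ≤ b τ := fun τ hτ' =>
      le_trans (haI τ hτ').2 (le_trans h₂ (hbI τ hτ').1)
    have h0Icc : (0:ℝ) ∈ Icc (0:ℝ) τmax := ⟨le_rfl, hτ.le⟩
    have ha0 : a 0 = aStar := by
      apply hleft.injOn (haI 0 h0Icc) haStarIcc
      rw [haW 0 h0Icc]; ring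
    have hb0 : b 0 = bStar := by
      apply hright.injOn (hbI 0 h0Icc) hbStarIcc
      rw [hbW 0 h0Icc, hwb]; ring
    -- key difference formula
    have hwIntAny : ∀ τ₁ ∈ Icc (0:ℝ) τmax, ∀ τ₂ ∈ Icc (0:ℝ) τmax,
        IntervalIntegrable w volume (a τ₂) (a τ₁) ∧
        IntervalIntegrable w volume (a τ₁) (b τ₁) ∧
        IntervalIntegrable w volume (b τ₁) (b τ₂) := by
      intro τ₁ h1 τ₂ h2
      exact ⟨hwInt _ _ (hsubL (haI τ₂ h2)) (hsubL (haI τ₁ h1)),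
        hwInt _ _ (hsubL (haI τ₁ h1)) (hsubR (hbI τ₁ h1)),
        hwInt _ _ (hsubR (hbI τ₁ h1)) (hsubR (hbI τ₂ h2))⟩
    have keyDiff : ∀ τ₁ ∈ Icc (0:ℝ) τmax, ∀ τ₂ ∈ Icc (0:ℝ) τmax, τ₁ ≤ τ₂ →
        F τ₂ - F τ₁ = (∫ x in a τ₂..a τ₁, (w aStar + τ₂ - w x)) +
          (∫ x in b τ₁..b τ₂, (w aStar + τ₂ - w x)) + (b τ₁ - a τ₁) * (τ₂ - τ₁) := by
      intro τ₁ h1 τ₂ h2 hle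
      obtain ⟨hi1, hi2, hi3⟩ := hwIntAny τ₁ h1 τ₂ h2
      have hsplit : (∫ x in a τ₂..a τ₁, w x) + (∫ x in a τ₁..b τ₁, w x) +
          (∫ x in b τ₁..b τ₂, w x) = ∫ x in a τ₂..b τ₂, w x := by
        rw [intervalIntegral.integral_add_adjacent_intervals hi1 hi2]
        exact intervalIntegral.integral_add_adjacent_intervals (hi1.trans hi2) hi3
      have e1 : (∫ x in a τ₂..a τ₁, (w aStar + τ₂ - w x)) =
          (a τ₁ - a τ₂) * (w aStar + τ₂) - ∫ x in a τ₂..a τ₁, w x := by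
        rw [intervalIntegral.integral_sub intervalIntegrable_const hi1,
          intervalIntegral.integral_const, smul_eq_mul]
      have e2 : (∫ x in b τ₁..b τ₂, (w aStar + τ₂ - w x)) =
          (b τ₂ - b τ₁) * (w aStar + τ₂) - ∫ x in b τ₁..b τ₂, w x := by
        rw [intervalIntegral.integral_sub intervalIntegrable_const hi3,
          intervalIntegral.integral_const, smul_eq_mul]
      simp only [hF]
      rw [e1, e2, ← hsplit]
      ring
    -- bounds for the pieces
    have boundA : ∀ τ₁ ∈ Icc (0:ℝ) τmax, ∀ τ₂ ∈ Icc (0:ℝ) τmax, τ₁ ≤ τ₂ →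
        0 ≤ (∫ x in a τ₂..a τ₁, (w aStar + τ₂ - w x)) ∧
        (∫ x in a τ₂..a τ₁, (w aStar + τ₂ - w x)) ≤ (a τ₁ - a τ₂) * (τ₂ - τ₁) := by
      intro τ₁ h1 τ₂ h2 hle
      have hmono := haMono τ₁ h1 τ₂ h2 hle
      have hInt : IntervalIntegrable (fun x => w aStar + τ₂ - w x) volume (a τ₂) (a τ₁) :=
        intervalIntegrable_const.sub (hwIntAny τ₁ h1 τ₂ h2).1
      have hbd : ∀ x ∈ Icc (a τ₂) (a τ₁), w aStar + τ₁ ≤ w x ∧ w x ≤ w aStar + τ₂ := by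
        intro x hx
        have hxI : x ∈ Icc l aStar := ⟨le_trans (haI τ₂ h2).1 hx.1, le_trans hx.2 (haI τ₁ h1).2⟩
        constructor
        · have := hleft.antitoneOn hxI (haI τ₁ h1) hx.2
          rw [haW τ₁ h1] at this; linarith
        · have := hleft.antitoneOn (haI τ₂ h2) hxI hx.1
          rw [haW τ₂ h2] at this; linarith
      constructor
      · apply intervalIntegral.integral_nonneg hmono
        intro x hx
        linarith [(hbd x hx).2]
      · calc (∫ x in a τ₂..a τ₁, (w aStar + τ₂ - w x))
            ≤ ∫ _x in a τ₂..a τ₁, (τ₂ - τ₁) := by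
              apply intervalIntegral.integral_mono_on hmono hInt intervalIntegrable_const
              intro x hx
              linarith [(hbd x hx).1]
          _ = (a τ₁ - a τ₂) * (τ₂ - τ₁) := by
              rw [intervalIntegral.integral_const, smul_eq_mul]
    have boundB : ∀ τ₁ ∈ Icc (0:ℝ) τmax, ∀ τ₂ ∈ Icc (0:ℝ) τmax, τ₁ ≤ τ₂ →
        0 ≤ (∫ x in b τ₁..b τ₂, (w aStar + τ₂ - w x)) ∧
        (∫ x in b τ₁..b τ₂, (w aStar + τ₂ - w x)) ≤ (b τ₂ - b τ₁) * (τ₂ - τ₁) := by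
      intro τ₁ h1 τ₂ h2 hle
      have hmono := hbMono τ₁ h1 τ₂ h2 hle
      have hInt : IntervalIntegrable (fun x => w aStar + τ₂ - w x) volume (b τ₁) (b τ₂) :=
        intervalIntegrable_const.sub (hwIntAny τ₁ h1 τ₂ h2).2.2
      have hbd : ∀ x ∈ Icc (b τ₁) (b τ₂), w aStar + τ₁ ≤ w x ∧ w x ≤ w aStar + τ₂ := by
        intro x hx
        have hxI : x ∈ Icc bStar r := ⟨le_trans (hbI τ₁ h1).1 hx.1, le_trans hx.2 (hbI τ₂ h2).2⟩
        constructor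
        · have := hright.monotoneOn (hbI τ₁ h1) hxI hx.1
          rw [hbW τ₁ h1] at this; linarith
        · have := hright.monotoneOn hxI (hbI τ₂ h2) hx.2
          rw [hbW τ₂ h2] at this; linarith
      constructor
      · apply intervalIntegral.integral_nonneg hmono
        intro x hx
        linarith [(hbd x hx).2]
      · calc (∫ x in b τ₁..b τ₂, (w aStar + τ₂ - w x))
            ≤ ∫ _x in b τ₁..b τ₂, (τ₂ - τ₁) := by
              apply intervalIntegral.integral_mono_on hmono hInt intervalIntegrable_const
              intro x hx
              linarith [(hbd x hx).1]
          _ = (b τ₂ - b τ₁) * (τ₂ - τ₁) := by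
              rw [intervalIntegral.integral_const, smul_eq_mul]
    -- strict monotonicity
    have hMono : StrictMonoOn F (Icc 0 τmax) := by
      intro τ₁ h1 τ₂ h2 hlt
      have hdiff := keyDiff τ₁ h1 τ₂ h2 hlt.le
      have hA := boundA τ₁ h1 τ₂ h2 hlt.le
      have hB := boundB τ₁ h1 τ₂ h2 hlt.le
      have hstrict : 0 < ∫ x in a τ₂..a τ₁, (w aStar + τ₂ - w x) := by
        apply intervalIntegral.intervalIntegral_pos_of_pos_on
          (intervalIntegrable_const.sub (hwIntAny τ₁ h1 τ₂ h2).1)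
        · intro x hx
          have hxI : x ∈ Icc l aStar :=
            ⟨le_trans (haI τ₂ h2).1 hx.1.le, le_trans hx.2.le (haI τ₁ h1).2⟩
          have := hleft (haI τ₂ h2) hxI hx.1
          rw [haW τ₂ h2] at this
          linarith
        · exact haStrict τ₁ h1 τ₂ h2 hlt
      have h3 : 0 ≤ (b τ₁ - a τ₁) * (τ₂ - τ₁) :=
        mul_nonneg (by linarith [hab τ₁ h1]) (by linarith)
      linarith [hA.1, hB.1]
    -- Lipschitz bound ⇒ continuity
    have hLip : ∀ τ₁ ∈ Icc (0:ℝ) τmax, ∀ τ₂ ∈ Icc (0:ℝ) τmax, τ₁ ≤ τ₂ →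
        F τ₂ - F τ₁ ≤ 3 * (r - l) * (τ₂ - τ₁) := by
      intro τ₁ h1 τ₂ h2 hle
      have hdiff := keyDiff τ₁ h1 τ₂ h2 hle
      have hA := boundA τ₁ h1 τ₂ h2 hle
      have hB := boundB τ₁ h1 τ₂ h2 hle
      have hd1 : a τ₁ - a τ₂ ≤ r - l := by
        have := (haI τ₂ h2).1; have := (haI τ₁ h1).2
        linarith [le_trans h₂ hbr']
      have hd2 : b τ₂ - b τ₁ ≤ r - l := by
        have := (hbI τ₁ h1).1; have := (hbI τ₂ h2).2
        linarith [le_trans hla' h₂]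
      have hd3 : b τ₁ - a τ₁ ≤ r - l := by
        have := (haI τ₁ h1).1; have := (hbI τ₁ h1).2
        linarith
      have ht : 0 ≤ τ₂ - τ₁ := by linarith
      nlinarith [hA.2, hB.2]
    have hcont : ContinuousOn F (Icc 0 τmax) := by
      have hrl : (0:ℝ) ≤ 3 * (r - l) := by nlinarith [lt_of_lt_of_le h₁ (le_trans h₂ hbr')]
      have : LipschitzOnWith (Real.toNNReal (3 * (r - l))) F (Icc 0 τmax) := by
        rw [lipschitzOnWith_iff_dist_le_mul]
        intro x hx y hy
        rw [Real.coe_toNNReal _ hrl, Real.dist_eq, Real.dist_eq]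
        rcases le_total x y with h | h
        · have h0 := (hMono.monotoneOn) hx hy h
          have := hLip x hx y hy h
          rw [abs_of_nonpos (by linarith), abs_of_nonpos (by linarith)]
          linarith
        · have h0 := (hMono.monotoneOn) hy hx h
          have := hLip y hy x hx h
          rw [abs_of_nonneg (by linarith), abs_of_nonneg (by linarith)]
          linarith
      exact this.continuousOn
    -- F 0 = 0
    have hF0 : F 0 = 0 := by
      simp only [hF, ha0, hb0]
      have : (∫ x in aStar..bStar, w x) = (bStar - aStar) * w aStar := by
        rw [intervalIntegral.integral_congr (g := fun _ => w aStar)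
          (by rw [uIcc_of_le h₂]; exact hconst)]
        simp [smul_eq_mul]
      rw [this]
      ring
    refine ⟨F, hcont, hMono, hF0, ?_, ?_⟩
    · intro τ hτ'
      refine ⟨a τ, haI τ hτ', b τ, hbI τ hτ', haW τ hτ', hbW τ hτ', ?_⟩
      simp only [hF, haW τ hτ']
    · intro lam hlam hle
      have hc0 : 0 < 2 / lam := by positivity
      have hmem : 2 / lam ∈ Icc (F 0) (F τmax) := ⟨by rw [hF0]; exact hc0.le, hle⟩
      obtain ⟨τ, hτI, hFτ⟩ := intermediate_value_Icc hτ.le hcont hmem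
      refine ⟨τ, ⟨hτI, hFτ⟩, ?_⟩
      rintro τ' ⟨hτ'I, hFτ'⟩
      exact hMono.injOn hτ'I hτI (hFτ'.trans hFτ.symm)
end
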